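/- Let k, m ≥ 1, ω₀ > 0. Let A = M ⊗ I_k where M is the real 3×3 matrix with rows (−3, 1, 0), (−3, 0, 1), (−1, 0, 0), let C₁ = e₂ ⊗ I_k and C₂ = e₃ ⊗ I_k ∈ ℝ^{3k×k} (e₂, e₃ the second and third standard basis column vectors of ℝ³), and let P ∈ ℝ^{3k×3k} be symmetric positive definite with Aᵀ P + P A = −I_{3k}. Let Γ ∈ ℝ^{m×m} be symmetric positive definite. Let η : [0, ∞) → ℝ^{3k}, θ̃ : [0, ∞) → ℝ^m be differentiable, and let B : [0, ∞) → ℝ^{k×m}, g, h, x₃ : [0, ∞) → ℝ^k satisfy, for all t ≥ 0: η̇(t) = ω₀ A η(t) + (1/ω₀) C₁ (g(t) + B(t) θ̃(t)) + (1/ω₀²) C₂ h(t), and the adaptation inequality θ̃(t)ᵀ ( Γ⁻¹ θ̃̇(t) + (1/ω₀) B(t)ᵀ C₁ᵀ P η̄(t) ) ≤ 0, where η̄(t) := η(t) − (1/ω₀²) C₂ x₃(t). Assume the bounds ‖g(t)‖ ≤ ũ_b, ‖h(t)‖ ≤ h_b, ‖B(t)‖ ≤ e_b (operator norm), ‖x₃(t)‖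 ≤ d_b, and ‖θ̃(t)‖ ≤ θ̃_b for all t. Then V(t) := η(t)ᵀ P η(t) + θ̃(t)ᵀ Γ⁻¹ θ̃(t) satisfies, for all t ≥ 0, V̇(t) ≤ −ω₀ ‖η(t)‖² + (2/ω₀) ( ũ_b ‖C₁ᵀ P‖ + h_b ‖C₂ᵀ P‖ / ω₀ ) ‖η(t)‖ + (2/ω₀³) ‖C₁ᵀ P‖ e_b d_b θ̃_b. -/

import Mathlib

open Matrix
open scoped Kronecker

/-- The ESO error-dynamics system matrix (before Kronecker lifting). -/
noncomputable def M : Matrix (Fin 3) (Fin 3) ℝ :=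
  !![-3, 1, 0; -3, 0, 1; -1, 0, 0]

/-- `C₁ = e₂ ⊗ I_k ∈ ℝ^{3k×k}`, where `e₂` is the second standard basis column vector
of `ℝ³` (indices `0, 1, 2`). -/
noncomputable def C1 (k : ℕ) : Matrix (Fin 3 × Fin k) (Fin k) ℝ :=
  Matrix.of fun p j =>
    (if p.1 = 1 then (1 : ℝ) else 0) * (1 : Matrix (Fin k) (Fin k) ℝ) p.2 j

/-- `C₂ = e₃ ⊗ I_k ∈ ℝ^{3k×k}`, where `e₃` is the third standard basis column vector
of `ℝ³` (indices `0, 1, 2`). -/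
noncomputable def C2 (k : ℕ) : Matrix (Fin 3 × Fin k) (Fin k) ℝ :=
  Matrix.of fun p j =>
    (if p.1 = 2 then (1 : ℝ) else 0) * (1 : Matrix (Fin k) (Fin k) ℝ) p.2 j

/-- Euclidean norm of a finitely-indexed real vector. -/
noncomputable def eucNorm {n : Type*} [Fintype n] (v : n → ℝ) : ℝ :=
  ‖(EuclideanSpace.equiv n ℝ).symm v‖

/-- Operator norm (Euclidean → Euclidean) of a real matrix. -/
noncomputable def opNorm {m n : Type*} [Fintype m] [Fintype n] [DecidableEq n]
    (A : Matrix m n ℝ) : ℝ :=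
  ‖LinearMap.toContinuousLinearMap (Matrix.toEuclideanLin A)‖

lemma eucNorm_nonneg' {n : Type*} [Fintype n] (v : n → ℝ) : 0 ≤ eucNorm v := norm_nonneg _

lemma eucNorm_sq' {n : Type*} [Fintype n] (v : n → ℝ) : eucNorm v ^ 2 = v ⬝ᵥ v := by
  have h : eucNorm v = Real.sqrt (∑ i, v i ^ 2) := by
    simp [eucNorm, EuclideanSpace.norm_eq, sq_abs]
  rw [h, Real.sq_sqrt (by positivity)]
  simp [dotProduct, sq]

lemma dot_le_eucNorm' {n : Type*} [Fintype n] (u v : n → ℝ) :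
    u ⬝ᵥ v ≤ eucNorm u * eucNorm v := by
  have := real_inner_le_norm ((EuclideanSpace.equiv n ℝ).symm u) ((EuclideanSpace.equiv n ℝ).symm v)
  simpa [PiLp.inner_apply, dotProduct, eucNorm, RCLike.inner_apply, mul_comm] using this

lemma mulVec_eucNorm_le' {m n : Type*} [Fintype m] [Fintype n] [DecidableEq n]
    (A : Matrix m n ℝ) (v : n → ℝ) :
    eucNorm (A *ᵥ v) ≤ opNorm A * eucNorm v := by
  have := (LinearMap.toContinuousLinearMap (Matrix.toEuclideanLin A)).le_opNorm
    ((EuclideanSpace.equiv n ℝ).symm v)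
  simpa [eucNorm, opNorm, Matrix.toEuclideanLin_apply_piLp_toLp, EuclideanSpace.equiv,
    Matrix.toLin'_apply] using this

lemma opNorm_nonneg' {m n : Type*} [Fintype m] [Fintype n] [DecidableEq n]
    (A : Matrix m n ℝ) : 0 ≤ opNorm A := norm_nonneg _

lemma dot_shift' {m n : Type*} [Fintype m] [Fintype n] (A : Matrix m n ℝ)
    (x : m → ℝ) (y : n → ℝ) : x ⬝ᵥ (A *ᵥ y) = (Aᵀ *ᵥ x) ⬝ᵥ y := by
  rw [Matrix.dotProduct_mulVec, Matrix.mulVec_transpose]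

lemma dot_symm' {n : Type*} [Fintype n] (Q : Matrix n n ℝ) (hQ : Qᵀ = Q) (x y : n → ℝ) :
    x ⬝ᵥ (Q *ᵥ y) = y ⬝ᵥ (Q *ᵥ x) := by
  rw [dot_shift', hQ, dotProduct_comm]

lemma hasDerivAt_dot' {n : Type*} [Fintype n] (Q : Matrix n n ℝ) {u v : ℝ → n → ℝ}
    {u' v' : n → ℝ} {t : ℝ} (hu : HasDerivAt u u' t) (hv : HasDerivAt v v' t) :
    HasDerivAt (fun s => u s ⬝ᵥ (Q *ᵥ v s)) (u' ⬝ᵥ (Q *ᵥ v t) + u t ⬝ᵥ (Q *ᵥ v')) t := by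
  have hui := hasDerivAt_pi.mp hu
  have hvi := hasDerivAt_pi.mp hv
  have key : HasDerivAt (fun s => ∑ i, u s i * ∑ j, Q i j * v s j)
      (∑ i, (u' i * (∑ j, Q i j * v t j) + u t i * ∑ j, Q i j * v' j)) t :=
    HasDerivAt.fun_sum fun i _ =>
      (hui i).mul (HasDerivAt.fun_sum fun j _ => ((hvi j).const_mul (Q i j)))
  have e1 : (fun s => u s ⬝ᵥ (Q *ᵥ v s)) = fun s => ∑ i, u s i * ∑ j, Q i j * v s j := by
    funext s; simp [dotProduct, Matrix.mulVec]
  rw [e1]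
  convert key using 1
  simp [dotProduct, Matrix.mulVec, Finset.sum_add_distrib]

lemma dot_P_mulVec' {a b : Type*} [Fintype a] [Fintype b] (C : Matrix a b ℝ)
    (Q : Matrix a a ℝ) (hQ : Qᵀ = Q) (x : a → ℝ) (w : b → ℝ) :
    x ⬝ᵥ (Q *ᵥ (C *ᵥ w)) = ((Cᵀ * Q) *ᵥ x) ⬝ᵥ w := by
  rw [dot_shift', hQ, dot_shift', Matrix.mulVec_mulVec]

lemma C2t_mul_C2' (k : ℕ) : (C2 k)ᵀ * (C2 k) = 1 := by
  ext j j'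
  simp [Matrix.mul_apply, C2, Matrix.transpose_apply, Fintype.sum_prod_type,
    Fin.sum_univ_three, Matrix.one_apply, ite_and]
  simp [eq_comm]

lemma eucNorm_C2_mulVec' (k : ℕ) (v : Fin k → ℝ) : eucNorm (C2 k *ᵥ v) = eucNorm v := by
  have h2 : eucNorm (C2 k *ᵥ v) ^ 2 = eucNorm v ^ 2 := by
    rw [eucNorm_sq', eucNorm_sq', Matrix.dotProduct_mulVec, ← Matrix.mulVec_transpose,
      Matrix.mulVec_mulVec, C2t_mul_C2', Matrix.one_mulVec, dotProduct_comm]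
  have h0 : (0:ℝ) ≤ eucNorm (C2 k *ᵥ v) := eucNorm_nonneg' _
  have h1 : (0:ℝ) ≤ eucNorm v := eucNorm_nonneg' _
  nlinarith [h0, h1, h2]

/-- Lyapunov derivative estimate in the proof of Theorem 2, for the adaptive ESO error
dynamics with nonzero disturbance: `V = ηᵀPη + θ̃ᵀΓ⁻¹θ̃` satisfies
`V̇ ≤ -ω₀‖η‖² + (2/ω₀)(ũ_b‖C₁ᵀP‖ + h_b‖C₂ᵀP‖/ω₀)‖η‖ + (2/ω₀³)‖C₁ᵀP‖ e_b d_b θ̃_b`. -/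
theorem stmt12 (k m : ℕ) (hk : 1 ≤ k) (hm : 1 ≤ m) (ω₀ : ℝ) (hω : 0 < ω₀)
    (P : Matrix (Fin 3 × Fin k) (Fin 3 × Fin k) ℝ) (hP : P.PosDef) (hPsymm : Pᵀ = P)
    (hlyap : (M ⊗ₖ (1 : Matrix (Fin k) (Fin k) ℝ))ᵀ * P +
      P * (M ⊗ₖ (1 : Matrix (Fin k) (Fin k) ℝ)) = -1)
    (Γ : Matrix (Fin m) (Fin m) ℝ) (hΓ : Γ.PosDef) (hΓsymm : Γᵀ = Γ)
    (η : ℝ → Fin 3 × Fin k → ℝ) (θt θt' : ℝ → Fin m → ℝ)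
    (B : ℝ → Matrix (Fin k) (Fin m) ℝ) (g h x₃ : ℝ → Fin k → ℝ)
    (ub hb eb db θb : ℝ)
    (hη : ∀ t ≥ (0 : ℝ),
      HasDerivAt η (ω₀ • ((M ⊗ₖ (1 : Matrix (Fin k) (Fin k) ℝ)) *ᵥ η t) +
        (1 / ω₀) • (C1 k *ᵥ (g t + B t *ᵥ θt t)) + (1 / ω₀ ^ 2) • (C2 k *ᵥ h t)) t)
    (hθd : ∀ t ≥ (0 : ℝ), HasDerivAt θt (θt' t) t)
    (hadapt : ∀ t ≥ (0 : ℝ),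
      θt t ⬝ᵥ (Γ⁻¹ *ᵥ θt' t +
        (1 / ω₀) • ((B t)ᵀ *ᵥ ((C1 k)ᵀ *ᵥ
          (P *ᵥ (η t - (1 / ω₀ ^ 2) • (C2 k *ᵥ x₃ t)))))) ≤ 0)
    (hg : ∀ t ≥ (0 : ℝ), eucNorm (g t) ≤ ub)
    (hh : ∀ t ≥ (0 : ℝ), eucNorm (h t) ≤ hb)
    (hB : ∀ t ≥ (0 : ℝ), opNorm (B t) ≤ eb)
    (hx₃ : ∀ t ≥ (0 : ℝ), eucNorm (x₃ t) ≤ db)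
    (hθb : ∀ t ≥ (0 : ℝ), eucNorm (θt t) ≤ θb) :
    ∀ t ≥ (0 : ℝ),
      deriv (fun s => η s ⬝ᵥ (P *ᵥ η s) + θt s ⬝ᵥ (Γ⁻¹ *ᵥ θt s)) t ≤
        -ω₀ * eucNorm (η t) ^ 2 +
          (2 / ω₀) * (ub * opNorm ((C1 k)ᵀ * P) + hb * opNorm ((C2 k)ᵀ * P) / ω₀) *
            eucNorm (η t) +
          (2 / ω₀ ^ 3) * opNorm ((C1 k)ᵀ * P) * eb * db * θb := by
  intro t ht
  have hω2 : (0:ℝ) < ω₀ ^ 2 := by positivity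
  set A := M ⊗ₖ (1 : Matrix (Fin k) (Fin k) ℝ) with hA
  set e := η t with he
  set θ := θt t with hθ
  set θ' := θt' t with hθ'
  set η' := ω₀ • (A *ᵥ e) + (1 / ω₀) • (C1 k *ᵥ (g t + B t *ᵥ θ)) +
    (1 / ω₀ ^ 2) • (C2 k *ᵥ h t) with hη'
  have hΓinv : (Γ⁻¹)ᵀ = Γ⁻¹ := by
    rw [Matrix.transpose_nonsing_inv, hΓsymm]
  -- derivative of V
  have hV : HasDerivAt (fun s => η s ⬝ᵥ (P *ᵥ η s) + θt s ⬝ᵥ (Γ⁻¹ *ᵥ θt s))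
      ((η' ⬝ᵥ (P *ᵥ e) + e ⬝ᵥ (P *ᵥ η')) + (θ' ⬝ᵥ (Γ⁻¹ *ᵥ θ) + θ ⬝ᵥ (Γ⁻¹ *ᵥ θ'))) t :=
    (hasDerivAt_dot' P (hη t ht) (hη t ht)).add
      (hasDerivAt_dot' Γ⁻¹ (hθd t ht) (hθd t ht))
  have hD : deriv (fun s => η s ⬝ᵥ (P *ᵥ η s) + θt s ⬝ᵥ (Γ⁻¹ *ᵥ θt s)) t =
      2 * (e ⬝ᵥ (P *ᵥ η')) + 2 * (θ ⬝ᵥ (Γ⁻¹ *ᵥ θ')) := by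
    rw [hV.deriv, dot_symm' P hPsymm η' e, dot_symm' Γ⁻¹ hΓinv θ' θ]; ring
  -- abbreviations
  set r1 := e ⬝ᵥ (P *ᵥ (A *ᵥ e)) with hr1
  set rg := e ⬝ᵥ (P *ᵥ (C1 k *ᵥ g t)) with hrg
  set rB := e ⬝ᵥ (P *ᵥ (C1 k *ᵥ (B t *ᵥ θ))) with hrB
  set rh := e ⬝ᵥ (P *ᵥ (C2 k *ᵥ h t)) with hrh
  set q := θ ⬝ᵥ (Γ⁻¹ *ᵥ θ') with hq
  have hsplit : e ⬝ᵥ (P *ᵥ η') = ω₀ * r1 + (1/ω₀) * rg + (1/ω₀) * rB + (1/ω₀^2) * rh := by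
    rw [hη', Matrix.mulVec_add, Matrix.mulVec_add, Matrix.mulVec_smul, Matrix.mulVec_smul,
      Matrix.mulVec_smul, dotProduct_add, dotProduct_add,
      dotProduct_smul, dotProduct_smul, dotProduct_smul]
    rw [show C1 k *ᵥ (g t + B t *ᵥ θ) = C1 k *ᵥ g t + C1 k *ᵥ (B t *ᵥ θ) from
      Matrix.mulVec_add ..]
    rw [Matrix.mulVec_add, dotProduct_add]
    simp only [smul_eq_mul]; ring
  -- the Lyapunov term
  have hterm1 : 2 * r1 = -(eucNorm e ^ 2) := by
    have h1 : e ⬝ᵥ ((Aᵀ * P) *ᵥ e) = e ⬝ᵥ ((P * A) *ᵥ e) := by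
      rw [dot_shift', Matrix.transpose_mul, Matrix.transpose_transpose, hPsymm,
        dotProduct_comm]
    have h2 : e ⬝ᵥ ((Aᵀ * P + P * A) *ᵥ e) = 2 * r1 := by
      rw [Matrix.add_mulVec, dotProduct_add, h1, hr1, Matrix.mulVec_mulVec]; ring
    rw [← h2, hlyap]
    rw [show ((-1 : Matrix (Fin 3 × Fin k) (Fin 3 × Fin k) ℝ) *ᵥ e) = -e by
      simp only [Matrix.neg_mulVec, Matrix.one_mulVec]]
    rw [dotProduct_neg, eucNorm_sq']
  -- nonnegativity facts
  have hub : 0 ≤ ub := le_trans (eucNorm_nonneg' _) (hg t ht)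
  have hhb : 0 ≤ hb := le_trans (eucNorm_nonneg' _) (hh t ht)
  have heb : 0 ≤ eb := le_trans (opNorm_nonneg' _) (hB t ht)
  have hdb : 0 ≤ db := le_trans (eucNorm_nonneg' _) (hx₃ t ht)
  have hθbn : 0 ≤ θb := le_trans (eucNorm_nonneg' _) (hθb t ht)
  set N1 := opNorm ((C1 k)ᵀ * P) with hN1
  set N2 := opNorm ((C2 k)ᵀ * P) with hN2
  have hN1n : 0 ≤ N1 := opNorm_nonneg' _
  have hN2n : 0 ≤ N2 := opNorm_nonneg' _
  have hen : 0 ≤ eucNorm e := eucNorm_nonneg' _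
  -- bound for rg
  have hshiftg : ∀ (w : Fin k → ℝ), e ⬝ᵥ (P *ᵥ (C1 k *ᵥ w)) = (((C1 k)ᵀ * P) *ᵥ e) ⬝ᵥ w :=
    fun w => dot_P_mulVec' (C1 k) P hPsymm e w
  have hshifth : e ⬝ᵥ (P *ᵥ (C2 k *ᵥ h t)) = (((C2 k)ᵀ * P) *ᵥ e) ⬝ᵥ h t :=
    dot_P_mulVec' (C2 k) P hPsymm e (h t)
  have hCe1 : eucNorm (((C1 k)ᵀ * P) *ᵥ e) ≤ N1 * eucNorm e := mulVec_eucNorm_le' _ _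
  have hCe2 : eucNorm (((C2 k)ᵀ * P) *ᵥ e) ≤ N2 * eucNorm e := mulVec_eucNorm_le' _ _
  have hbg : rg ≤ N1 * eucNorm e * ub := by
    rw [hrg, hshiftg]
    calc (((C1 k)ᵀ * P) *ᵥ e) ⬝ᵥ g t
        ≤ eucNorm (((C1 k)ᵀ * P) *ᵥ e) * eucNorm (g t) := dot_le_eucNorm' _ _
      _ ≤ (N1 * eucNorm e) * ub :=
          mul_le_mul hCe1 (hg t ht) (eucNorm_nonneg' _) (mul_nonneg hN1n hen)
  have hbh : rh ≤ N2 * eucNorm e * hb := by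
    rw [hrh, hshifth]
    calc (((C2 k)ᵀ * P) *ᵥ e) ⬝ᵥ h t
        ≤ eucNorm (((C2 k)ᵀ * P) *ᵥ e) * eucNorm (h t) := dot_le_eucNorm' _ _
      _ ≤ (N2 * eucNorm e) * hb :=
          mul_le_mul hCe2 (hh t ht) (eucNorm_nonneg' _) (mul_nonneg hN2n hen)
  -- the adaptive term
  set z := C2 k *ᵥ x₃ t with hz
  set w := (B t)ᵀ *ᵥ ((C1 k)ᵀ *ᵥ (P *ᵥ (e - (1 / ω₀ ^ 2) • z))) with hw
  have hadapt' : q ≤ -(1/ω₀) * (θ ⬝ᵥ w) := by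
    have := hadapt t ht
    rw [dotProduct_add, dotProduct_smul] at this
    have : q + (1/ω₀) * (θ ⬝ᵥ w) ≤ 0 := by simpa [hq, hw, hz, smul_eq_mul] using this
    linarith
  have hrBshift : rB = θ ⬝ᵥ ((B t)ᵀ *ᵥ ((C1 k)ᵀ *ᵥ (P *ᵥ e))) := by
    rw [hrB, hshiftg, dot_shift', dotProduct_comm, ← Matrix.mulVec_mulVec]
  have hwdiff : θ ⬝ᵥ ((B t)ᵀ *ᵥ ((C1 k)ᵀ *ᵥ (P *ᵥ e))) - θ ⬝ᵥ w =
      (1/ω₀^2) * (θ ⬝ᵥ ((B t)ᵀ *ᵥ ((C1 k)ᵀ *ᵥ (P *ᵥ z)))) := by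
    rw [hw, Matrix.mulVec_sub, Matrix.mulVec_smul, Matrix.mulVec_sub, Matrix.mulVec_smul,
      Matrix.mulVec_sub, Matrix.mulVec_smul, dotProduct_sub, dotProduct_smul]
    simp only [smul_eq_mul]; ring
  have hcore : θ ⬝ᵥ ((B t)ᵀ *ᵥ ((C1 k)ᵀ *ᵥ (P *ᵥ z))) ≤ (eb * θb) * (N1 * db) := by
    have h1 : θ ⬝ᵥ ((B t)ᵀ *ᵥ ((C1 k)ᵀ *ᵥ (P *ᵥ z))) =
        (B t *ᵥ θ) ⬝ᵥ (((C1 k)ᵀ * P) *ᵥ z) := by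
      rw [dot_shift', Matrix.transpose_transpose, Matrix.mulVec_mulVec]
    rw [h1]
    have h2 : eucNorm (B t *ᵥ θ) ≤ eb * θb := by
      calc eucNorm (B t *ᵥ θ) ≤ opNorm (B t) * eucNorm θ := mulVec_eucNorm_le' _ _
        _ ≤ eb * θb := mul_le_mul (hB t ht) (hθb t ht) (eucNorm_nonneg' _) heb
    have h3 : eucNorm (((C1 k)ᵀ * P) *ᵥ z) ≤ N1 * db := by
      calc eucNorm (((C1 k)ᵀ * P) *ᵥ z) ≤ N1 * eucNorm z := mulVec_eucNorm_le' _ _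
        _ = N1 * eucNorm (x₃ t) := by rw [hz, eucNorm_C2_mulVec']
        _ ≤ N1 * db := by
            exact mul_le_mul_of_nonneg_left (hx₃ t ht) hN1n
    calc (B t *ᵥ θ) ⬝ᵥ (((C1 k)ᵀ * P) *ᵥ z)
        ≤ eucNorm (B t *ᵥ θ) * eucNorm (((C1 k)ᵀ * P) *ᵥ z) := dot_le_eucNorm' _ _
      _ ≤ (eb * θb) * (N1 * db) :=
          mul_le_mul h2 h3 (eucNorm_nonneg' _) (mul_nonneg heb hθbn)
  -- combine the adaptive pieces
  have hBq : (2/ω₀) * rB + 2 * q ≤ (2/ω₀^3) * N1 * eb * db * θb := by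
    have key : (2/ω₀) * rB + 2 * q ≤
        (2/ω₀) * ((1/ω₀^2) * (θ ⬝ᵥ ((B t)ᵀ *ᵥ ((C1 k)ᵀ *ᵥ (P *ᵥ z))))) := by
      have h2q : 2 * q ≤ 2 * (-(1/ω₀) * (θ ⬝ᵥ w)) :=
        mul_le_mul_of_nonneg_left hadapt' (by norm_num)
      have h1 : (2/ω₀) * rB + 2 * q ≤
          (2/ω₀) * (θ ⬝ᵥ ((B t)ᵀ *ᵥ ((C1 k)ᵀ *ᵥ (P *ᵥ e))) - θ ⬝ᵥ w) := by
        rw [hrBshift]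
        calc (2/ω₀) * (θ ⬝ᵥ ((B t)ᵀ *ᵥ ((C1 k)ᵀ *ᵥ (P *ᵥ e)))) + 2 * q
            ≤ (2/ω₀) * (θ ⬝ᵥ ((B t)ᵀ *ᵥ ((C1 k)ᵀ *ᵥ (P *ᵥ e)))) +
              2 * (-(1/ω₀) * (θ ⬝ᵥ w)) := add_le_add le_rfl h2q
          _ = (2/ω₀) * (θ ⬝ᵥ ((B t)ᵀ *ᵥ ((C1 k)ᵀ *ᵥ (P *ᵥ e))) - θ ⬝ᵥ w) := by ring
      rw [hwdiff] at h1; exact h1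
    refine le_trans key ?_
    have hpos : (0:ℝ) < 2/ω₀ * (1/ω₀^2) := by positivity
    have := mul_le_mul_of_nonneg_left hcore (le_of_lt hpos)
    calc (2/ω₀) * ((1/ω₀^2) * (θ ⬝ᵥ ((B t)ᵀ *ᵥ ((C1 k)ᵀ *ᵥ (P *ᵥ z)))))
        = (2/ω₀ * (1/ω₀^2)) * (θ ⬝ᵥ ((B t)ᵀ *ᵥ ((C1 k)ᵀ *ᵥ (P *ᵥ z)))) := by ring
      _ ≤ (2/ω₀ * (1/ω₀^2)) * ((eb * θb) * (N1 * db)) := this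
      _ = (2/ω₀^3) * N1 * eb * db * θb := by field_simp
  -- put everything together
  rw [hD, hsplit]
  have hgterm : (2/ω₀) * rg ≤ (2/ω₀) * (N1 * eucNorm e * ub) :=
    mul_le_mul_of_nonneg_left hbg (by positivity)
  have hhterm : (2/ω₀^2) * rh ≤ (2/ω₀^2) * (N2 * eucNorm e * hb) :=
    mul_le_mul_of_nonneg_left hbh (by positivity)
  calc 2 * (ω₀ * r1 + (1/ω₀) * rg + (1/ω₀) * rB + (1/ω₀^2) * rh) + 2 * q
      = ω₀ * (2 * r1) + (2/ω₀) * rg + (2/ω₀^2) * rh + ((2/ω₀) * rB + 2 * q) := by ring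
    _ ≤ ω₀ * (2 * r1) + (2/ω₀) * (N1 * eucNorm e * ub) + (2/ω₀^2) * (N2 * eucNorm e * hb) +
        (2/ω₀^3) * N1 * eb * db * θb :=
        add_le_add (add_le_add (add_le_add le_rfl hgterm) hhterm) hBq
    _ = -ω₀ * eucNorm e ^ 2 + (2/ω₀) * (ub * N1 + hb * N2 / ω₀) * eucNorm e +
        (2/ω₀^3) * N1 * eb * db * θb := by
        rw [hterm1]; field_simp; ring
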